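/- arXiv:2506.06187 — 4 statements merged into one kernel-verified Lean document; each statement's English description precedes it below -/
import Mathlib

section
/- Let M be a first-order structure, let Ω = [0,1) with Lebesgue measure, and let θ_1(x,ȳ),…,θ_n(x,ȳ) be first-order formulas such that in all structures ⊨ (θ_1 ∨ … ∨ θ_n) and ⊨ ¬(θ_i ∧ θ_j) for i < j. Fix Borel-measurable functions f̄ = (f_1,…,f_k) : Ω → M (each with countable range, preimages of points Borel) and Borel sets B_1,…,B_n ⊆ Ω. Then the following are equivalent: (i) there exists a Borel random variable g : Ω → M such that B_i = {ω : M ⊨ θ_i(g(ω), f̄(ω))} (up to null sets) for each i; (ii) B_1,…,B_n partition Ω (up to null sets) and B_i ⊆ {ω : M ⊨ ∃x θ_i(x, f̄(ω))} (up to null sets) for each i. -/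
open MeasureTheory FirstOrder

/-! Up to null sets both conditions are pointwise in `ω`. Condition (i) asks for a measurable
choice of `x` such that `θ_i(x, f̄(ω))` holds exactly for the `i` with `ω ∈ B_i`; since the `θ_i`
partition the possible `x`, such an `x` exists iff `ω` lies in exactly one `B_i` and
`∃ x, θ_i(x, f̄(ω))` holds for that `i`. As `M` is countable, taking the first solution in an
enumeration of `M` makes the choice measurable. -/

theorem exists_forall_iff_iff_of_partition {ι M : Type*} {P : ι → M → Prop}
    (hex : ∀ x, ∃ i, P i x) (hdisj : ∀ x i j, i ≠ j → ¬(P i x ∧ P j x)) {b : ι → Prop} :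
    (∃ x, ∀ i, b i ↔ P i x) ↔
      (∃ i, b i) ∧ (∀ i j, i ≠ j → ¬(b i ∧ b j)) ∧ ∀ i, b i → ∃ x, P i x := by
  constructor
  · rintro ⟨x, hx⟩
    obtain ⟨i, hi⟩ := hex x
    exact ⟨⟨i, (hx i).2 hi⟩, fun i j hij hb => hdisj x i j hij ⟨(hx i).1 hb.1, (hx j).1 hb.2⟩,
      fun i hb => ⟨x, (hx i).1 hb⟩⟩
  · rintro ⟨⟨i₀, hi₀⟩, hb, hwit⟩
    obtain ⟨x, hx⟩ := hwit i₀ hi₀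
    refine ⟨x, fun i => ⟨fun hi => ?_, fun hi => ?_⟩⟩
    · obtain rfl : i = i₀ := by by_contra hne; exact hb i i₀ hne ⟨hi, hi₀⟩
      exact hx
    · obtain rfl : i = i₀ := by by_contra hne; exact hdisj x i i₀ hne ⟨hi, hx⟩
      exact hi₀

section Measurable

variable {Ω M : Type*} [MeasurableSpace Ω] [Countable M]

theorem measurableSet_preimage_tuple {ι : Type*} [Finite ι] {f : ι → Ω → M}
    (hf : ∀ j a, MeasurableSet (f j ⁻¹' {a})) (S : Set (ι → M)) :
    MeasurableSet ((fun ω j => f j ω) ⁻¹' S) := by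
  rw [← Set.biUnion_preimage_singleton]
  refine MeasurableSet.biUnion S.to_countable fun v _ => ?_
  have hfiber : (fun ω j => f j ω) ⁻¹' {v} = ⋂ j, f j ⁻¹' {v j} := by
    ext ω
    simp [funext_iff]
  rw [hfiber]
  exact .iInter fun j => hf j (v j)

theorem exists_measurable_choice [Nonempty M] {Q : Ω → M → Prop}
    (hQ : ∀ a, MeasurableSet {ω | Q ω a}) :
    ∃ g : Ω → M, (∀ a, MeasurableSet (g ⁻¹' {a})) ∧ ∀ ω, (∃ a, Q ω a) → Q ω (g ω) := by
  classical
  obtain ⟨e, he⟩ := exists_surjective_nat M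
  let p : Ω → ℕ → Prop := fun ω m => Q ω (e m) ∨ ¬∃ a, Q ω a
  have hp : ∀ ω, ∃ m, p ω m := by
    intro ω
    by_cases h : ∃ a, Q ω a
    · obtain ⟨m, hm⟩ := he.exists.1 h
      exact ⟨m, Or.inl hm⟩
    · exact ⟨0, Or.inr h⟩
  have hQ' : ∀ a, Measurable (Q · a) := fun a => measurableSet_setOfPred.1 (hQ a)
  have hN : Measurable fun ω => Nat.find (hp ω) :=
    measurable_find hp fun m => measurableSet_setOfPred.2 ((hQ' (e m)).or (.not (.exists hQ')))
  exact ⟨fun ω => e (Nat.find (hp ω)), fun a => hN (.of_discrete (s := e ⁻¹' {a})),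
    fun ω h => (Nat.find_spec (hp ω)).resolve_right (not_not_intro h)⟩

theorem exists_measurable_ae_iff_ae_exists [Nonempty M] {μ : Measure Ω} {Q : Ω → M → Prop}
    (hQ : ∀ a, MeasurableSet {ω | Q ω a}) :
    (∃ g : Ω → M, (∀ a, MeasurableSet (g ⁻¹' {a})) ∧ ∀ᵐ ω ∂μ, Q ω (g ω)) ↔
      ∀ᵐ ω ∂μ, ∃ a, Q ω a := by
  refine ⟨fun ⟨g, _, hg⟩ => hg.mono fun ω h => ⟨g ω, h⟩, fun h => ?_⟩
  obtain ⟨g, hgm, hg⟩ := exists_measurable_choice hQ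
  exact ⟨g, hgm, h.mono hg⟩

end Measurable

theorem ae_cover_pairwise_disjoint_subset_iff {Ω ι : Type*} [MeasurableSpace Ω] [Countable ι]
    {μ : Measure Ω} {B E : ι → Set Ω} :
    (∀ᵐ ω ∂μ, (∃ i, ω ∈ B i) ∧ (∀ i j, i ≠ j → ¬(ω ∈ B i ∧ ω ∈ B j)) ∧
        ∀ i, ω ∈ B i → ω ∈ E i) ↔
      μ (⋃ i, B i)ᶜ = 0 ∧ (∀ i j, i ≠ j → μ (B i ∩ B j) = 0) ∧ ∀ i, μ (B i \ E i) = 0 := by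
  simp only [Filter.eventually_and, ae_all_iff, Filter.eventually_imp_distrib_left,
    measure_eq_zero_iff_ae_notMem, Set.mem_compl_iff, Set.mem_iUnion, not_not, Set.mem_inter_iff,
    Set.mem_sdiff, not_and]

/-- for formulas `θ_1,…,θ_n(x,ȳ)` that are (in all structures)
jointly exhaustive and mutually exclusive in `x`, and Borel random variables
`f̄ : [0,1) → M` and Borel sets `B_1,…,B_n ⊆ [0,1)`, the following are equivalent:
(i) some Borel random variable `g` has `B_i = [[θ_i(g,f̄)]]` up to null sets;
(ii) the `B_i` partition `[0,1)` up to null sets and `B_i ⊆ [[∃x θ_i(x,f̄)]]` up to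
null sets. The variable `x` is the `none` coordinate of `Option (Fin k)`. -/
theorem stmt_4 {L : Language} (M : Type) [L.Structure M] [Countable M] [Nonempty M]
    (n k : ℕ) (θ : Fin n → L.Formula (Option (Fin k)))
    (hex : ∀ (A : Type) [L.Structure A] (v : Option (Fin k) → A),
      ∃ i, (θ i).Realize v)
    (hdisj : ∀ (A : Type) [L.Structure A] (v : Option (Fin k) → A) (i j : Fin n),
      i ≠ j → ¬((θ i).Realize v ∧ (θ j).Realize v))
    (f : Fin k → ℝ → M) (hf : ∀ j a, MeasurableSet (f j ⁻¹' {a}))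
    (B : Fin n → Set ℝ) (hB : ∀ i, MeasurableSet (B i)) :
    (∃ g : ℝ → M, (∀ a, MeasurableSet (g ⁻¹' {a})) ∧
      ∀ i, (volume.restrict (Set.Ico (0 : ℝ) 1))
        (symmDiff (B i) {ω | (θ i).Realize (fun o => o.elim (g ω) (fun j => f j ω))}) = 0)
    ↔
    ((volume.restrict (Set.Ico (0 : ℝ) 1)) ((⋃ i, B i)ᶜ) = 0 ∧
     (∀ i j, i ≠ j → (volume.restrict (Set.Ico (0 : ℝ) 1)) (B i ∩ B j) = 0) ∧
     ∀ i, (volume.restrict (Set.Ico (0 : ℝ) 1))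
       (B i \ {ω | ∃ x : M, (θ i).Realize (fun o => o.elim x (fun j => f j ω))}) = 0) := by
  let P : ℝ → Fin n → M → Prop := fun ω i x => (θ i).Realize (fun o => o.elim x (fun j => f j ω))
  have hQ : ∀ x, MeasurableSet {ω | ∀ i, ω ∈ B i ↔ P ω i x} := fun x => by
    rw [Set.ofPred_forall]
    exact .iInter fun i => (hB i).iff
      (measurableSet_preimage_tuple hf {v | (θ i).Realize (fun o => o.elim x v)})
  simp_rw [measure_symmDiff_eq_zero_iff, Filter.eventuallyEq_set, ← ae_all_iff]
  refine (exists_measurable_ae_iff_ae_exists hQ).trans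
    (Iff.trans ?_ ae_cover_pairwise_disjoint_subset_iff)
  refine Filter.eventually_congr (.of_forall fun ω => ?_)
  exact exists_forall_iff_iff_of_partition (fun x => hex M _) (fun x i j => hdisj M _ i j)
end

section
/- Let (Ω,μ) be a probability space and let V_1,…,V_n and C_1,…,C_n be measurable sets such that V_1,…,V_n partition Ω, ⋃_j C_j = Ω, and μ(V_i ∖ C_i) < η′ for each i. Then there exist measurable sets B_1,…,B_n partitioning Ω with B_i ⊆ C_i and μ(V_i △ B_i) ≤ (n+1)·η′ for each i. -/
open MeasureTheory Set
open scoped Function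

/-! The points of `V i` lying outside `C i` form a set `L = ⋃ j, V j \ C j` of measure at most
`n η'`. Keep `V i ∩ C i` in the `i`-th cell and hand every point of `L` to the first `C j` that
contains it (the cells of `disjointed C`). Then the `i`-th cell differs from `V i` only inside
`(V i \ C i) ∪ L`, whose measure is below `η' + n η'`. -/

def subordinatePartition {Ω ι : Type*} [Preorder ι] [LocallyFiniteOrderBot ι]
    (V C : ι → Set Ω) (i : ι) : Set Ω :=
  V i ∩ C i ∪ (⋃ j, V j \ C j) ∩ disjointed C i

section

variable {Ω ι : Type*} {V C : ι → Set Ω}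

theorem disjoint_inter_iUnion_diff (hV : Pairwise (Disjoint on V)) (i : ι) :
    Disjoint (V i ∩ C i) (⋃ j, V j \ C j) := by
  refine disjoint_iUnion_right.2 fun j => Set.disjoint_left.2 fun x hx hxj => ?_
  obtain rfl | hij := eq_or_ne i j
  · exact hxj.2 hx.2
  · exact (hV hij).le_bot ⟨hx.1, hxj.1⟩

theorem subordinatePartition_subset [Preorder ι] [LocallyFiniteOrderBot ι] (i : ι) :
    subordinatePartition V C i ⊆ C i :=
  union_subset inter_subset_right (inter_subset_right.trans (disjointed_subset C i))

theorem pairwise_disjoint_subordinatePartition [LinearOrder ι] [LocallyFiniteOrderBot ι]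
    (hV : Pairwise (Disjoint on V)) : Pairwise (Disjoint on subordinatePartition V C) := by
  intro i j hij
  refine Disjoint.union_left (Disjoint.union_right ?_ ?_) (Disjoint.union_right ?_ ?_)
  · exact (hV hij).mono inter_subset_left inter_subset_left
  · exact (disjoint_inter_iUnion_diff hV i).mono_right inter_subset_left
  · exact ((disjoint_inter_iUnion_diff hV j).mono_right inter_subset_left).symm
  · exact (disjoint_disjointed C hij).mono inter_subset_right inter_subset_right

theorem iUnion_subordinatePartition [PartialOrder ι] [LocallyFiniteOrderBot ι]
    (hVC : ⋃ i, V i ⊆ ⋃ i, C i) : ⋃ i, subordinatePartition V C i = ⋃ i, V i := by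
  refine (iUnion_subset fun i => union_subset ?_ ?_).antisymm (iUnion_subset fun i x hx => ?_)
  · exact inter_subset_left.trans (subset_iUnion V i)
  · exact inter_subset_left.trans (iUnion_mono fun j => sdiff_subset)
  by_cases hxC : x ∈ C i
  · exact mem_iUnion.2 ⟨i, Or.inl ⟨hx, hxC⟩⟩
  · have hxD : x ∈ ⋃ k, disjointed C k := by
      rw [iUnion_disjointed]
      exact hVC (mem_iUnion.2 ⟨i, hx⟩)
    obtain ⟨k, hk⟩ := mem_iUnion.1 hxD
    exact mem_iUnion.2 ⟨k, Or.inr ⟨mem_iUnion.2 ⟨i, hx, hxC⟩, hk⟩⟩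

theorem MeasurableSet.subordinatePartition [MeasurableSpace Ω] [Preorder ι]
    [LocallyFiniteOrderBot ι] [Countable ι] (hV : ∀ i, MeasurableSet (V i))
    (hC : ∀ i, MeasurableSet (C i)) (i : ι) :
    MeasurableSet (subordinatePartition V C i) :=
  ((hV i).inter (hC i)).union ((MeasurableSet.iUnion fun j => (hV j).diff (hC j)).inter
    -- `disjointed C i` is `C i` with finitely many `C j` removed
    (disjointedRec (fun _ _ ht => ht.diff (hC _)) (hC i)))

theorem symmDiff_subordinatePartition_subset [Preorder ι] [LocallyFiniteOrderBot ι] (i : ι) :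
    symmDiff (V i) (subordinatePartition V C i) ⊆ V i \ C i ∪ ⋃ j, V j \ C j := by
  rintro x (⟨hxV, hxB⟩ | ⟨hxB, hxV⟩)
  · exact Or.inl ⟨hxV, fun hxC => hxB (Or.inl ⟨hxV, hxC⟩)⟩
  · rcases hxB with hx | hx
    · exact absurd hx.1 hxV
    · exact Or.inr hx.1

theorem measureReal_symmDiff_subordinatePartition_le [MeasurableSpace Ω] [Preorder ι]
    [LocallyFiniteOrderBot ι] [Fintype ι] (μ : Measure Ω) [IsFiniteMeasure μ] {η : ℝ}
    (hη : ∀ i, μ.real (V i \ C i) ≤ η) (i : ι) :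
    μ.real (symmDiff (V i) (subordinatePartition V C i)) ≤ (Fintype.card ι + 1) * η :=
  calc μ.real (symmDiff (V i) (subordinatePartition V C i))
      ≤ μ.real (V i \ C i ∪ ⋃ j, V j \ C j) :=
        measureReal_mono (symmDiff_subordinatePartition_subset i)
    _ ≤ μ.real (V i \ C i) + ∑ j, μ.real (V j \ C j) :=
        (measureReal_union_le _ _).trans (by gcongr; exact measureReal_iUnion_fintype_le _)
    _ ≤ η + ∑ _j : ι, η := add_le_add (hη i) (Finset.sum_le_sum fun j _ => hη j)
    _ = (Fintype.card ι + 1) * η := by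
        rw [Finset.sum_const, Finset.card_univ, nsmul_eq_mul]
        ring

end

/-- a measurable partition `V_1,…,V_n` of `Ω` which almost refines a
measurable cover `C_1,…,C_n` (`μ(V_i ∖ C_i) < η′`) can be corrected to a partition
`B_1,…,B_n` subordinate to the cover (`B_i ⊆ C_i`) with `μ(V_i △ B_i) ≤ (n+1)·η′`. -/
theorem stmt_5 {Ω : Type*} [MeasurableSpace Ω] (μ : Measure Ω)
    [IsProbabilityMeasure μ]
    (n : ℕ) (V C : Fin n → Set Ω)
    (hV : ∀ i, MeasurableSet (V i)) (hC : ∀ i, MeasurableSet (C i))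
    (hVdisj : Pairwise (Function.onFun Disjoint V))
    (hVcover : (⋃ i, V i) = Set.univ)
    (hCcover : (⋃ i, C i) = Set.univ)
    (η' : ℝ) (hη' : ∀ i, (μ (V i \ C i)).toReal < η') :
    ∃ B : Fin n → Set Ω, (∀ i, MeasurableSet (B i)) ∧
      Pairwise (Function.onFun Disjoint B) ∧
      (⋃ i, B i) = Set.univ ∧
      (∀ i, B i ⊆ C i) ∧
      ∀ i, (μ (symmDiff (V i) (B i))).toReal ≤ (n + 1 : ℝ) * η' := by
  refine ⟨subordinatePartition V C, MeasurableSet.subordinatePartition hV hC,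
    pairwise_disjoint_subordinatePartition hVdisj, ?_, subordinatePartition_subset, fun i => ?_⟩
  · rw [iUnion_subordinatePartition (hCcover ▸ subset_univ _), hVcover]
  · have := measureReal_symmDiff_subordinatePartition_le μ (fun j => (hη' j).le) i
    rwa [Fintype.card_fin] at this
end

section
/- Let f_1,…,f_k be simple M-valued random variables on [0,1) (finite-range, with Borel level sets) and let φ(x_1,…,x_k,y) be any first-order formula. Then for every ε > 0 there is a simple M-valued random variable g on [0,1) such that μ([[∃y φ(f̄,y)]] △ [[φ(f̄,g)]]) < ε. Consequently μ[[∃y φ(f̄,y)]] = sup_g μ[[φ(f̄,g)]], the supremum ranging over simple random variables g. -/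
/-!
The tuple `f̄` is itself a simple function, so it takes finitely many values `v`. Choosing one
witness `y_v` of `∃ y, φ(v, y)` for each value `v` where one exists, and composing, gives a simple
`g` with `[[∃y φ(f̄,y)]] = [[φ(f̄,g)]]` exactly; every other simple `g` satisfies
`[[φ(f̄,g)]] ⊆ [[∃y φ(f̄,y)]]`, so the supremum is attained.
-/

open MeasureTheory FirstOrder

namespace MeasureTheory.SimpleFunc

variable {α : Type*} [MeasurableSpace α]

def pi {ι : Type*} [Finite ι] {β : ι → Type*} (f : ∀ i, SimpleFunc α (β i)) :
    SimpleFunc α (∀ i, β i) where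
  toFun a i := f i a
  measurableSet_fiber' v := by
    have : (fun a i => f i a) ⁻¹' {v} = ⋂ i, f i ⁻¹' {v i} := by
      ext a
      simp [funext_iff]
    rw [this]
    exact .iInter fun i => (f i).measurableSet_fiber (v i)
  finite_range' := by
    refine (Set.Finite.pi fun i => (f i).finite_range).subset ?_
    rintro _ ⟨a, rfl⟩ i -
    exact ⟨a, rfl⟩

theorem exists_skolem {β γ : Type*} [Nonempty γ] (F : SimpleFunc α β) (P : β → γ → Prop) :
    ∃ g : SimpleFunc α γ, {a | ∃ y, P (F a) y} = {a | P (F a) (g a)} :=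
  ⟨F.map fun b => Classical.epsilon (P b),
    Set.ext fun _ => ⟨Classical.epsilon_spec, fun h => ⟨_, h⟩⟩⟩

end MeasureTheory.SimpleFunc

/-- fullness: for simple `M`-valued random variables `f̄` on `[0,1)`
and any first-order formula `φ(x̄,y)`, the event `[[∃y φ(f̄,y)]]` is approximated
from within, up to arbitrarily small measure, by events `[[φ(f̄,g)]]` with `g`
simple; consequently `μ[[∃y φ(f̄,y)]]` is the supremum of the `μ[[φ(f̄,g)]]`. -/
theorem stmt_7 {L : Language} (M : Type) [L.Structure M] [Nonempty M]
    (k : ℕ) (f : Fin k → ℝ → M)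
    (hf : ∀ j, (Set.range (f j)).Finite ∧ ∀ a, MeasurableSet (f j ⁻¹' {a}))
    (φ : L.Formula (Fin (k + 1))) :
    (∀ ε : ℝ, 0 < ε → ∃ g : ℝ → M, (Set.range g).Finite ∧
      (∀ a, MeasurableSet (g ⁻¹' {a})) ∧
      ((volume.restrict (Set.Ico (0 : ℝ) 1))
        (symmDiff {ω | ∃ x : M, φ.Realize (Fin.snoc (fun j => f j ω) x)}
          {ω | φ.Realize (Fin.snoc (fun j => f j ω) (g ω))})).toReal < ε)
    ∧
    ((volume.restrict (Set.Ico (0 : ℝ) 1))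
        {ω | ∃ x : M, φ.Realize (Fin.snoc (fun j => f j ω) x)}).toReal
      = sSup {t : ℝ | ∃ g : ℝ → M, (Set.range g).Finite ∧
          (∀ a, MeasurableSet (g ⁻¹' {a})) ∧
          t = ((volume.restrict (Set.Ico (0 : ℝ) 1))
            {ω | φ.Realize (Fin.snoc (fun j => f j ω) (g ω))}).toReal} := by
  let F : SimpleFunc ℝ (Fin k → M) := SimpleFunc.pi fun j => ⟨f j, (hf j).2, (hf j).1⟩
  obtain ⟨g, hg⟩ := F.exists_skolem fun v x => φ.Realize (Fin.snoc v x)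
  have hE : {ω | ∃ x : M, φ.Realize (Fin.snoc (fun j => f j ω) x)}
      = {ω | φ.Realize (Fin.snoc (fun j => f j ω) (g ω))} := hg
  refine ⟨fun ε hε => ⟨g, g.finite_range, g.measurableSet_fiber, by simpa [hE] using hε⟩,
    (IsGreatest.csSup_eq ⟨?_, ?_⟩).symm⟩
  · exact ⟨g, g.finite_range, g.measurableSet_fiber, by rw [hE]⟩
  · rintro _ ⟨g', -, -, rfl⟩
    exact ENNReal.toReal_mono (measure_ne_top _ _) (measure_mono fun ω h => ⟨g' ω, h⟩)
end

section
/- Let M, N be countable structures in the same countable language such that M ⊨ φ where φ is a Scott sentence of M. If the Borel randomizations satisfy M^{[0,1)} ≅ N^{[0,1)} (as metric structures), then M ≅ N. -/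
/-!
At a generic point `ω`, the map `a ↦ Φ (fun _ => a) ω` is an isomorphism `M ≃[L] N`.
Compatibility with `σ`, which preserves measure, says that `Φ` of a constant tuple `x` almost
surely satisfies exactly the formulas `x` satisfies, so the map is elementary. The language may
be uncountable, but for fixed `x` the image tuple takes only countably many values, and each
value that disagrees with `x` on some formula is taken on a null set; hence one null set serves
all formulas and, `M` being countable, all tuples. For surjectivity, take `f` with `Φ f = c`
a.s.; preservation of `μ [[f ≠ g]]` makes the events `[[Φ f = Φ a]]` almost disjoint with
measures `μ [[f = a]]` summing to `1`, so `Φ f` almost surely agrees with some constant `Φ a`.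
-/

open MeasureTheory FirstOrder

local notation "μ01" => volume.restrict (Set.Ico (0 : ℝ) 1)

section MeasurableFibers

variable {Ω X Y : Type*} [MeasurableSpace Ω]

def MeasurableFibers (f : Ω → X) : Prop := ∀ x, MeasurableSet (f ⁻¹' {x})

theorem MeasurableFibers.const (x : X) : MeasurableFibers fun _ : Ω => x :=
  fun _ => MeasurableSet.const _

theorem MeasurableFibers.pi {ι : Type*} [Countable ι] {f : ι → Ω → X}
    (hf : ∀ i, MeasurableFibers (f i)) : MeasurableFibers fun ω i => f i ω := by
  intro x
  have hfiber : ((fun ω i => f i ω) ⁻¹' {x}) = ⋂ i, f i ⁻¹' {x i} := by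
    ext ω
    simp [funext_iff]
  rw [hfiber]
  exact .iInter fun i => hf i (x i)

theorem MeasurableFibers.prod {f : Ω → X} {g : Ω → Y} (hf : MeasurableFibers f)
    (hg : MeasurableFibers g) : MeasurableFibers fun ω => (f ω, g ω) := by
  rintro ⟨x, y⟩
  rw [← Set.singleton_prod_singleton, Set.mk_preimage_prod]
  exact (hf x).inter (hg y)

theorem MeasurableFibers.measurableSet_preimage [Countable X] {f : Ω → X}
    (hf : MeasurableFibers f) (s : Set X) : MeasurableSet (f ⁻¹' s) := by
  rw [← Set.biUnion_preimage_singleton]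
  exact .biUnion s.to_countable fun x _ => hf x

theorem MeasurableFibers.measurableSet_eq [Countable X] {f g : Ω → X}
    (hf : MeasurableFibers f) (hg : MeasurableFibers g) : MeasurableSet {ω | f ω = g ω} :=
  (hf.prod hg).measurableSet_preimage {p | p.1 = p.2}

theorem ae_of_measure_preimage_singleton_eq_zero [Countable X] {μ : Measure Ω} (f : Ω → X)
    {p : X → Prop} (h : ∀ x, ¬p x → μ (f ⁻¹' {x}) = 0) : ∀ᵐ ω ∂μ, p (f ω) :=
  ae_iff.2 <| (measure_preimage_eq_zero_iff_of_countable (Set.to_countable {x | ¬p x})).2 h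

theorem measure_setOf_eq_eq_one_sub [Countable X] {μ : Measure Ω} [IsProbabilityMeasure μ]
    {f g : Ω → X} (hf : MeasurableFibers f) (hg : MeasurableFibers g) :
    μ {ω | f ω = g ω} = 1 - μ {ω | f ω ≠ g ω} := by
  have h := prob_compl_eq_one_sub (μ := μ) (hf.measurableSet_eq hg).compl
  rwa [compl_compl] at h

end MeasurableFibers

theorem ae_mem_iff_of_measure_eq_setOf_const {Ω : Type*} [MeasurableSpace Ω] {μ : Measure Ω}
    [IsProbabilityMeasure μ] {G : Set Ω} (hG : MeasurableSet G) (p : Prop)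
    (h : μ G = μ {_ω | p}) : ∀ᵐ ω ∂μ, ω ∈ G ↔ p := by
  by_cases hp : p
  · simp only [hp, Set.ofPred_true, measure_univ, iff_true] at h ⊢
    exact (mem_ae_iff_prob_eq_one hG).2 h
  · simp only [hp, Set.ofPred_false, measure_empty, iff_false] at h ⊢
    exact measure_eq_zero_iff_ae_notMem.1 h

instance isProbabilityMeasure_volume_restrict_Ico_zero_one : IsProbabilityMeasure μ01 := by
  rw [isProbabilityMeasure_iff, Measure.restrict_apply_univ, Real.volume_Ico]
  norm_num

section Randomization

variable {Ω : Type*} [MeasurableSpace Ω] {μ : Measure Ω} [IsProbabilityMeasure μ]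
  {L : Language} {M N : Type*} [L.Structure M] [L.Structure N] [Countable N]
  {Φ : (Ω → M) → (Ω → N)}

theorem ae_realize_map_const_iff {σ : Set Ω → Set Ω}
    (hΦ : ∀ f, MeasurableFibers f → MeasurableFibers (Φ f))
    (hσ : ∀ E, MeasurableSet E → μ (σ E) = μ E)
    (hΦσ : ∀ (n : ℕ) (ψ : L.Formula (Fin n)) (f : Fin n → Ω → M),
      (∀ j, MeasurableFibers (f j)) →
      μ (symmDiff (σ {ω | ψ.Realize fun j => f j ω})
        {ω | ψ.Realize fun j => Φ (f j) ω}) = 0)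
    {n : ℕ} (ψ : L.Formula (Fin n)) (x : Fin n → M) :
    ∀ᵐ ω ∂μ, ψ.Realize (fun j => Φ (fun _ => x j) ω) ↔ ψ.Realize x := by
  have hG : MeasurableSet {ω | ψ.Realize fun j => Φ (fun _ => x j) ω} :=
    (MeasurableFibers.pi fun j => hΦ _ (.const (x j))).measurableSet_preimage {b | ψ.Realize b}
  have hae : σ {_ω | ψ.Realize x} =ᵐ[μ] {ω | ψ.Realize fun j => Φ (fun _ => x j) ω} :=
    measure_symmDiff_eq_zero_iff.1 (hΦσ n ψ (fun j _ => x j) fun j => .const (x j))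
  refine ae_mem_iff_of_measure_eq_setOf_const hG _ ?_
  rw [← measure_congr hae, hσ _ (.const _)]

theorem ae_forall_realize_map_const_iff [Countable M] {σ : Set Ω → Set Ω}
    (hΦ : ∀ f, MeasurableFibers f → MeasurableFibers (Φ f))
    (hσ : ∀ E, MeasurableSet E → μ (σ E) = μ E)
    (hΦσ : ∀ (n : ℕ) (ψ : L.Formula (Fin n)) (f : Fin n → Ω → M),
      (∀ j, MeasurableFibers (f j)) →
      μ (symmDiff (σ {ω | ψ.Realize fun j => f j ω})
        {ω | ψ.Realize fun j => Φ (f j) ω}) = 0) :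
    ∀ᵐ ω ∂μ, ∀ (n : ℕ) (x : Fin n → M) (ψ : L.Formula (Fin n)),
      ψ.Realize (fun j => Φ (fun _ => x j) ω) ↔ ψ.Realize x := by
  refine ae_all_iff.2 fun n => ae_all_iff.2 fun x => ?_
  refine ae_of_measure_preimage_singleton_eq_zero (fun ω j => Φ (fun _ => x j) ω)
    (p := fun b => ∀ ψ : L.Formula (Fin n), ψ.Realize b ↔ ψ.Realize x) fun b hb => ?_
  obtain ⟨ψ, hψ⟩ := not_forall.1 hb
  refine measure_mono_null (fun ω hω => ?_)
    (ae_iff.1 (ae_realize_map_const_iff hΦ hσ hΦσ ψ x))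
  rw [Set.mem_preimage, Set.mem_singleton_iff] at hω
  rwa [Set.mem_ofPred_eq, hω]

theorem measure_setOf_map_eq_map [Countable M]
    (hΦ : ∀ f, MeasurableFibers f → MeasurableFibers (Φ f))
    (hΦd : ∀ f g, MeasurableFibers f → MeasurableFibers g →
      μ {ω | Φ f ω ≠ Φ g ω} = μ {ω | f ω ≠ g ω})
    {f g : Ω → M} (hf : MeasurableFibers f) (hg : MeasurableFibers g) :
    μ {ω | Φ f ω = Φ g ω} = μ {ω | f ω = g ω} := by
  rw [measure_setOf_eq_eq_one_sub (hΦ f hf) (hΦ g hg), measure_setOf_eq_eq_one_sub hf hg,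
    hΦd f g hf hg]

theorem measure_iUnion_setOf_map_eq_map_const [Countable M]
    (hΦ : ∀ f, MeasurableFibers f → MeasurableFibers (Φ f))
    (hΦd : ∀ f g, MeasurableFibers f → MeasurableFibers g →
      μ {ω | Φ f ω ≠ Φ g ω} = μ {ω | f ω ≠ g ω})
    {f : Ω → M} (hf : MeasurableFibers f) :
    μ (⋃ a, {ω | Φ f ω = Φ (fun _ => a) ω}) = 1 := by
  have hdisj : Pairwise fun a b =>
      AEDisjoint μ {ω | Φ f ω = Φ (fun _ => a) ω} {ω | Φ f ω = Φ (fun _ => b) ω} := by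
    intro a b hab
    refine measure_mono_null (t := {ω | Φ (fun _ => a) ω = Φ (fun _ => b) ω})
      (fun ω hω => hω.1.symm.trans hω.2) ?_
    rw [measure_setOf_map_eq_map hΦ hΦd (.const a) (.const b)]
    simp [hab]
  calc μ (⋃ a, {ω | Φ f ω = Φ (fun _ => a) ω})
      = ∑' a, μ {ω | Φ f ω = Φ (fun _ => a) ω} :=
        measure_iUnion₀ hdisj fun a =>
          ((hΦ f hf).measurableSet_eq (hΦ _ (.const a))).nullMeasurableSet
    _ = ∑' a, μ (f ⁻¹' {a}) :=
        tsum_congr fun a => measure_setOf_map_eq_map hΦ hΦd hf (.const a)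
    _ = μ (⋃ a, f ⁻¹' {a}) := (measure_iUnion (pairwise_disjoint_fiber f) hf).symm
    _ = 1 := by rw [Set.iUnion_eq_univ_iff.2 fun ω => ⟨f ω, rfl⟩, measure_univ]

theorem ae_forall_exists_map_const_eq [Countable M]
    (hΦ : ∀ f, MeasurableFibers f → MeasurableFibers (Φ f))
    (hΦd : ∀ f g, MeasurableFibers f → MeasurableFibers g →
      μ {ω | Φ f ω ≠ Φ g ω} = μ {ω | f ω ≠ g ω})
    (hΦs : ∀ g, MeasurableFibers g →
      ∃ f, MeasurableFibers f ∧ μ {ω | Φ f ω ≠ g ω} = 0) :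
    ∀ᵐ ω ∂μ, ∀ c : N, ∃ a : M, Φ (fun _ => a) ω = c := by
  refine ae_all_iff.2 fun c => ?_
  obtain ⟨f, hf, hfc⟩ := hΦs _ (.const c)
  have hcover : ∀ᵐ ω ∂μ, ω ∈ ⋃ a, {ω | Φ f ω = Φ (fun _ => a) ω} :=
    (mem_ae_iff_prob_eq_one (.iUnion fun a => (hΦ f hf).measurableSet_eq (hΦ _ (.const a)))).2
      (measure_iUnion_setOf_map_eq_map_const hΦ hΦd hf)
  filter_upwards [hcover, ae_iff.2 hfc] with ω hω hωc
  obtain ⟨a, ha⟩ := Set.mem_iUnion.1 hω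
  exact ⟨a, ha.symm.trans hωc⟩

end Randomization

theorem stmt_11_general {L : Language} (M N : Type) [L.Structure M] [L.Structure N]
    [Countable M] [Countable N]
    -- isomorphism of the Borel randomizations
    (Φ : (ℝ → M) → (ℝ → N)) (σ : Set ℝ → Set ℝ)
    (hΦmeas : ∀ f : ℝ → M, (∀ a, MeasurableSet (f ⁻¹' {a})) →
      ∀ b, MeasurableSet (Φ f ⁻¹' {b}))
    (hσμ : ∀ E, MeasurableSet E → μ01 (σ E) = μ01 E)
    (hΦiso : ∀ f g : ℝ → M, (∀ a, MeasurableSet (f ⁻¹' {a})) →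
      (∀ a, MeasurableSet (g ⁻¹' {a})) →
      μ01 {ω | Φ f ω ≠ Φ g ω} = μ01 {ω | f ω ≠ g ω})
    (hΦsurj : ∀ g : ℝ → N, (∀ b, MeasurableSet (g ⁻¹' {b})) →
      ∃ f : ℝ → M, (∀ a, MeasurableSet (f ⁻¹' {a})) ∧ μ01 {ω | Φ f ω ≠ g ω} = 0)
    (hcompat : ∀ (m : ℕ) (ψ : L.Formula (Fin m)) (f : Fin m → ℝ → M),
      (∀ j a, MeasurableSet (f j ⁻¹' {a})) →
      μ01 (symmDiff (σ {ω | ψ.Realize (fun j => f j ω)})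
        {ω | ψ.Realize (fun j => Φ (f j) ω)}) = 0) :
    Nonempty (M ≃[L] N) := by
  obtain ⟨ω, hrealize, hsurj⟩ := ((ae_forall_realize_map_const_iff hΦmeas hσμ hcompat).and
    (ae_forall_exists_map_const_eq hΦmeas hΦiso hΦsurj)).exists
  let g : L.ElementaryEmbedding M N :=
    ⟨fun a => Φ (fun _ => a) ω, fun n ψ x => hrealize n x ψ⟩
  exact ⟨⟨Equiv.ofBijective g ⟨g.injective, hsurj⟩, fun f x => g.map_fun f x,
    fun r x => g.map_rel r x⟩⟩

/-- if `M` satisfies a Scott sentence `φ` of itself (here given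
abstractly: a sentence in some system of sentences whose models among countable
structures are exactly the isomorphic copies of `M`), and the Borel randomizations
`M^{[0,1)}` and `N^{[0,1)}` are isomorphic — given concretely by a pair
`(Φ, σ)` acting on `M`-valued Borel random variables on `[0,1)` and on the
probability algebra of `[0,1)`, preserving measure, Boolean operations mod null,
distances, the event maps `[[φ(·)]]` of all first-order formulas, and surjective
mod null — then `M ≅ N`. -/
theorem stmt_11 {L : Language} (M N : Type) [L.Structure M] [L.Structure N]
    [Countable M] [Countable N] [Nonempty M] [Nonempty N]
    -- Scott sentence data
    (S : Type) (Sat : ∀ (A : Type) [L.Structure A], S → Prop) (φscott : S)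
    (hScott : ∀ (A : Type) [L.Structure A] [Countable A],
      Sat A φscott ↔ Nonempty (M ≃[L] A))
    (hMφ : Sat M φscott)
    -- isomorphism of the Borel randomizations
    (Φ : (ℝ → M) → (ℝ → N)) (σ : Set ℝ → Set ℝ)
    (hΦmeas : ∀ f : ℝ → M, (∀ a, MeasurableSet (f ⁻¹' {a})) →
      ∀ b, MeasurableSet (Φ f ⁻¹' {b}))
    (hσmeas : ∀ E, MeasurableSet E → MeasurableSet (σ E))
    (hσμ : ∀ E, MeasurableSet E → μ01 (σ E) = μ01 E)
    (hσunion : ∀ E F, MeasurableSet E → MeasurableSet F →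
      μ01 (symmDiff (σ (E ∪ F)) (σ E ∪ σ F)) = 0)
    (hσcompl : ∀ E, MeasurableSet E → μ01 (symmDiff (σ Eᶜ) (σ E)ᶜ) = 0)
    (hσsurj : ∀ F, MeasurableSet F → ∃ E, MeasurableSet E ∧
      μ01 (symmDiff (σ E) F) = 0)
    (hΦiso : ∀ f g : ℝ → M, (∀ a, MeasurableSet (f ⁻¹' {a})) →
      (∀ a, MeasurableSet (g ⁻¹' {a})) →
      μ01 {ω | Φ f ω ≠ Φ g ω} = μ01 {ω | f ω ≠ g ω})
    (hΦsurj : ∀ g : ℝ → N, (∀ b, MeasurableSet (g ⁻¹' {b})) →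
      ∃ f : ℝ → M, (∀ a, MeasurableSet (f ⁻¹' {a})) ∧ μ01 {ω | Φ f ω ≠ g ω} = 0)
    (hcompat : ∀ (m : ℕ) (ψ : L.Formula (Fin m)) (f : Fin m → ℝ → M),
      (∀ j a, MeasurableSet (f j ⁻¹' {a})) →
      μ01 (symmDiff (σ {ω | ψ.Realize (fun j => f j ω)})
        {ω | ψ.Realize (fun j => Φ (f j) ω)}) = 0) :
    Nonempty (M ≃[L] N) :=
  stmt_11_general M N Φ σ hΦmeas hσμ hΦiso hΦsurj hcompat
end
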